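/- arXiv:math/0005309 — 2 statements merged into one kernel-verified Lean document; each statement's English description precedes it below -/
import Mathlib

section
/- Let A₀ be a Noetherian integral domain with a prime element π and let σ be an injective ring endomorphism of A₀ with σ(π) = π. Let (M, φ) be a finite free σ-module over A₀, and set N₀ = ⋃_{k≥1} Ker(φ^k). Then N₀ is a φ-stable submodule on which φ is locally nilpotent, both N₀ and M/N₀ are torsion-free finitely generated A₀-modules, and the induced map φ on M/N₀ is injective after localizing at (π). -/
/-! Since `φᵏ (a • x) = σᵏ a • φᵏ x` and `σᵏ a ≠ 0` for injective `σ` and `a ≠ 0`, the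
torsion-freeness of `M` passes to `M / N₀`; finite generation of `N₀` is Noetherianity of `M`. -/

namespace SemilinearMap

variable {R M : Type*} [Semiring R] [AddCommMonoid M] [Module R M] {σ : R →+* R}

theorem iterate_map_smulₛₗ (φ : M →ₛₗ[σ] M) (k : ℕ) (a : R) (x : M) :
    (⇑φ)^[k] (a • x) = (⇑σ)^[k] a • (⇑φ)^[k] x := by
  induction k generalizing a x with
  | zero => rfl
  | succ k ih => simp only [Function.iterate_succ_apply, map_smulₛₗ, ih]

def nilpotentPart (φ : M →ₛₗ[σ] M) : Submodule R M where
  carrier := {x | ∃ k, (⇑φ)^[k] x = 0}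
  zero_mem' := ⟨0, rfl⟩
  add_mem' := by
    rintro x y ⟨k, hx⟩ ⟨l, hy⟩
    refine ⟨k + l, ?_⟩
    rw [iterate_map_add, Function.iterate_add_apply (⇑φ) k l y, hy, iterate_map_zero, add_comm k l,
      Function.iterate_add_apply, hx, iterate_map_zero, add_zero]
  smul_mem' := by
    rintro a x ⟨k, hx⟩
    exact ⟨k, by rw [iterate_map_smulₛₗ, hx, smul_zero]⟩

variable {φ : M →ₛₗ[σ] M}

theorem mem_nilpotentPart {x : M} : x ∈ nilpotentPart φ ↔ ∃ k, (⇑φ)^[k] x = 0 := Iff.rfl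

theorem map_mem_nilpotentPart_iff {x : M} : φ x ∈ nilpotentPart φ ↔ x ∈ nilpotentPart φ := by
  constructor
  · rintro ⟨k, hk⟩
    exact ⟨k + 1, hk⟩
  · rintro ⟨k, hk⟩
    exact ⟨k, by rw [← Function.iterate_succ_apply, Function.iterate_succ_apply', hk, map_zero]⟩

theorem mem_nilpotentPart_of_smul_mem [IsCancelMulZero R] [Module.IsTorsionFree R M]
    (hσ : Function.Injective σ) {a : R} (ha : a ≠ 0) {x : M} (hx : a • x ∈ nilpotentPart φ) :
    x ∈ nilpotentPart φ := by
  obtain ⟨k, hk⟩ := hx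
  rw [iterate_map_smulₛₗ] at hk
  have hσa : (⇑σ)^[k] a ≠ 0 := by
    simpa only [iterate_map_zero] using (hσ.iterate k).ne (a₂ := 0) ha
  exact ⟨k, (smul_eq_zero_iff_right hσa).mp hk⟩

theorem eq_nilpotentPart_of_forall_mem_iff {N : Submodule R M}
    (hN : ∀ x, x ∈ N ↔ ∃ k ≥ 1, (⇑φ)^[k] x = 0) :
    N = nilpotentPart φ := by
  ext x
  rw [hN, mem_nilpotentPart]
  refine ⟨fun ⟨k, _, hk⟩ ↦ ⟨k, hk⟩, fun ⟨k, hk⟩ ↦ ⟨k + 1, by omega, ?_⟩⟩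
  rw [Function.iterate_succ_apply', hk, map_zero]

end SemilinearMap

open SemilinearMap in
theorem stmt_6_general {A₀ : Type*} [CommRing A₀] [IsDomain A₀] [IsNoetherianRing A₀]
    (σ : A₀ →+* A₀) (hσinj : Function.Injective σ)
    {M : Type*} [AddCommGroup M] [Module A₀ M] [Module.Free A₀ M] [Module.Finite A₀ M]
    (φ : M →ₛₗ[σ] M)
    (N₀ : Submodule A₀ M)
    (hN₀ : ∀ x : M, x ∈ N₀ ↔ ∃ k ≥ 1, (⇑φ)^[k] x = 0) :
    (∀ x ∈ N₀, φ x ∈ N₀) ∧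
    (∀ x ∈ N₀, ∃ k, (⇑φ)^[k] x = 0) ∧
    N₀.FG ∧ Module.Finite A₀ (M ⧸ N₀) ∧
    (∀ (a : A₀), a ≠ 0 → ∀ x ∈ N₀, a • x = 0 → x = 0) ∧
    (∀ (a : A₀) (x : M), a ≠ 0 → a • x ∈ N₀ → x ∈ N₀) ∧
    (∀ x : M, φ x ∈ N₀ → x ∈ N₀) := by
  obtain rfl := eq_nilpotentPart_of_forall_mem_iff hN₀
  exact ⟨fun _ ↦ map_mem_nilpotentPart_iff.mpr, fun _ ↦ id, IsNoetherian.noetherian _,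
    inferInstance, fun _ ha _ _ ↦ (smul_eq_zero_iff_right ha).mp,
    fun _ _ ha ↦ mem_nilpotentPart_of_smul_mem hσinj ha, fun _ ↦ map_mem_nilpotentPart_iff.mp⟩

/-- Splitting off the nilpotent part of a σ-module (Lemma 4.5): with
`N₀ = ⋃ₖ Ker φᵏ`, the submodule `N₀` is φ-stable, φ is locally nilpotent on `N₀`,
`N₀` and `M/N₀` are torsion-free and finitely generated, and the induced map of φ
on `M/N₀` is injective (hence injective after localizing at `(π)`). -/
theorem stmt_6 {A₀ : Type*} [CommRing A₀] [IsDomain A₀] [IsNoetherianRing A₀]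
    (π : A₀) (hπ : Prime π)
    (σ : A₀ →+* A₀) (hσinj : Function.Injective σ) (hσπ : σ π = π)
    {M : Type*} [AddCommGroup M] [Module A₀ M] [Module.Free A₀ M] [Module.Finite A₀ M]
    (φ : M →ₛₗ[σ] M)
    (N₀ : Submodule A₀ M)
    (hN₀ : ∀ x : M, x ∈ N₀ ↔ ∃ k ≥ 1, (⇑φ)^[k] x = 0) :
    (∀ x ∈ N₀, φ x ∈ N₀) ∧
    (∀ x ∈ N₀, ∃ k, (⇑φ)^[k] x = 0) ∧
    N₀.FG ∧ Module.Finite A₀ (M ⧸ N₀) ∧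
    (∀ (a : A₀), a ≠ 0 → ∀ x ∈ N₀, a • x = 0 → x = 0) ∧
    (∀ (a : A₀) (x : M), a ≠ 0 → a • x ∈ N₀ → x ∈ N₀) ∧
    (∀ x : M, φ x ∈ N₀ → x ∈ N₀) :=
  stmt_6_general σ hσinj φ N₀ hN₀
end

section
/- Let A be a commutative ring with an endomorphism σ. Let K(A,σ) be the Grothendieck group of the category of finite A-modules with a σ-linear endomorphism, modulo short exact sequences and the relation [M, φ₁+φ₂] = [M, φ₁] + [M, φ₂], with A-module structure a·[M,φ] = [M, L_a∘φ]. Then for every a ∈ A and every object (M,φ), one has a·[M,φ] = σ(a)·[M,φ] in K(A,σ); consequently the ideal J of A generated by {a − σ(a) : a ∈ A} annihilates K(A,σ). -/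
/-!
Since `a • φ = L_a ∘ φ` and `σ a • φ = φ ∘ L_a`, it suffices to show `κ (φ ∘ u) = κ (u ∘ φ)` for
every `A`-linear `u`. Let `Φ (x, y) = (φ y, u (φ y))` on `M × M`. The graph of `u` is `Φ`-stable,
with `Φ` inducing `φ ∘ u` on it and `0` on the quotient; the first factor is `Φ`-stable too, with
`Φ` inducing `0` on it and `u ∘ φ` on the quotient. Both extensions compute `κ (M × M) Φ`, and
cancelling `κ M 0` gives the claim.
-/

section

variable {A : Type} [CommRing A] {σ : A →+* A} {K : Type} [AddCommGroup K]

variable (σ) in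
def IsAdditiveOnExact
    (κ : ∀ (M : Type) [AddCommGroup M] [Module A M] [Module.Finite A M], (M →ₛₗ[σ] M) → K) :
    Prop :=
  ∀ (M₁ M M₂ : Type) [AddCommGroup M₁] [Module A M₁] [Module.Finite A M₁]
    [AddCommGroup M] [Module A M] [Module.Finite A M]
    [AddCommGroup M₂] [Module A M₂] [Module.Finite A M₂]
    (φ₁ : M₁ →ₛₗ[σ] M₁) (φ : M →ₛₗ[σ] M) (φ₂ : M₂ →ₛₗ[σ] M₂)
    (f : M₁ →ₗ[A] M) (g : M →ₗ[A] M₂),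
    Function.Injective f → Function.Surjective g →
    LinearMap.range f = LinearMap.ker g →
    (∀ x, f (φ₁ x) = φ (f x)) → (∀ x, g (φ x) = φ₂ (g x)) →
    κ M φ = κ M₁ φ₁ + κ M₂ φ₂

theorem IsAdditiveOnExact.apply_comp_comm
    {κ : ∀ (M : Type) [AddCommGroup M] [Module A M] [Module.Finite A M], (M →ₛₗ[σ] M) → K}
    (hκ : IsAdditiveOnExact σ κ) (M : Type) [AddCommGroup M] [Module A M] [Module.Finite A M]
    (φ : M →ₛₗ[σ] M) (u : M →ₗ[A] M) :
    κ M (φ ∘ₛₗ u) = κ M (u ∘ₛₗ φ) := by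
  let graph : M →ₗ[A] M × M := LinearMap.id.prod u
  let Φ : M × M →ₛₗ[σ] M × M := graph ∘ₛₗ φ ∘ₛₗ LinearMap.snd A M M
  have hgraph : κ (M × M) Φ = κ M (φ ∘ₛₗ u) + κ M 0 :=
    hκ M (M × M) M _ Φ 0 graph ((-u).coprod LinearMap.id)
      (fun x y h => congrArg Prod.fst h) (fun y => ⟨(0, y), by simp⟩)
      ((LinearMap.graph_eq_range_prod u).symm.trans (LinearMap.graph_eq_ker_coprod u))
      (fun x => by simp [Φ, graph]) (fun p => by simp [Φ, graph])
  have hfst : κ (M × M) Φ = κ M 0 + κ M (u ∘ₛₗ φ) :=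
    hκ M (M × M) M 0 Φ _ (LinearMap.inl A M M) (LinearMap.snd A M M) LinearMap.inl_injective
      LinearMap.snd_surjective (LinearMap.range_inl A M M) (fun x => by simp [Φ])
      (fun p => by simp [Φ, graph])
  rw [hgraph, add_comm] at hfst
  exact add_left_cancel hfst

end

theorem stmt_17_general (A : Type) [CommRing A] (σ : A →+* A)
    (K : Type) [AddCommGroup K]
    (κ : ∀ (M : Type) [AddCommGroup M] [Module A M] [Module.Finite A M], (M →ₛₗ[σ] M) → K)
    (hexact : ∀ (M₁ M M₂ : Type) [AddCommGroup M₁] [Module A M₁] [Module.Finite A M₁]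
      [AddCommGroup M] [Module A M] [Module.Finite A M]
      [AddCommGroup M₂] [Module A M₂] [Module.Finite A M₂]
      (φ₁ : M₁ →ₛₗ[σ] M₁) (φ : M →ₛₗ[σ] M) (φ₂ : M₂ →ₛₗ[σ] M₂)
      (f : M₁ →ₗ[A] M) (g : M →ₗ[A] M₂),
      Function.Injective f → Function.Surjective g →
      LinearMap.range f = LinearMap.ker g →
      (∀ x, f (φ₁ x) = φ (f x)) → (∀ x, g (φ x) = φ₂ (g x)) →
      κ M φ = κ M₁ φ₁ + κ M₂ φ₂)
    (M : Type) [AddCommGroup M] [Module A M] [Module.Finite A M]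
    (φ : M →ₛₗ[σ] M) (a : A) :
    κ M (a • φ) = κ M (σ a • φ) := by
  have hσ : σ a • φ = φ ∘ₛₗ (a • LinearMap.id) := by ext; simp
  have ha : a • φ = (a • LinearMap.id) ∘ₛₗ φ := by ext; simp
  rw [hσ, ha]
  exact (IsAdditiveOnExact.apply_comp_comm hexact M φ _).symm

/-- The key observation of section 10 about the Grothendieck group `K(A,σ)`: for any additive
invariant `κ` of finite `A`-modules with a σ-linear endomorphism — additive on short exact
sequences and satisfying `κ(M, φ₁+φ₂) = κ(M,φ₁) + κ(M,φ₂)` — one has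
`κ(M, a•φ) = κ(M, σ(a)•φ)`, i.e. `a·[M,φ] = σ(a)·[M,φ]` in `K(A,σ)`; consequently the ideal
generated by `{a − σ(a)}` annihilates `K(A,σ)`. -/
theorem stmt_17 (A : Type) [CommRing A] (σ : A →+* A)
    (K : Type) [AddCommGroup K]
    (κ : ∀ (M : Type) [AddCommGroup M] [Module A M] [Module.Finite A M], (M →ₛₗ[σ] M) → K)
    (hexact : ∀ (M₁ M M₂ : Type) [AddCommGroup M₁] [Module A M₁] [Module.Finite A M₁]
      [AddCommGroup M] [Module A M] [Module.Finite A M]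
      [AddCommGroup M₂] [Module A M₂] [Module.Finite A M₂]
      (φ₁ : M₁ →ₛₗ[σ] M₁) (φ : M →ₛₗ[σ] M) (φ₂ : M₂ →ₛₗ[σ] M₂)
      (f : M₁ →ₗ[A] M) (g : M →ₗ[A] M₂),
      Function.Injective f → Function.Surjective g →
      LinearMap.range f = LinearMap.ker g →
      (∀ x, f (φ₁ x) = φ (f x)) → (∀ x, g (φ x) = φ₂ (g x)) →
      κ M φ = κ M₁ φ₁ + κ M₂ φ₂)
    (hadd : ∀ (M : Type) [AddCommGroup M] [Module A M] [Module.Finite A M]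
      (φ₁ φ₂ : M →ₛₗ[σ] M), κ M (φ₁ + φ₂) = κ M φ₁ + κ M φ₂)
    (M : Type) [AddCommGroup M] [Module A M] [Module.Finite A M]
    (φ : M →ₛₗ[σ] M) (a : A) :
    κ M (a • φ) = κ M (σ a • φ) :=
  stmt_17_general A σ K κ hexact M φ a
end
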